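/- arXiv:2104.04002 — 2 statements merged into one kernel-verified Lean document; each statement's English description precedes it below -/
import Mathlib

section
/- Let E be a Dedekind complete vector lattice, (P_γ)_{γ∈Γ} a net of band projections on E with P_γ ↑ I, and (x_α)_{α∈A} a net in E. If for each γ the net (P_γ x_α)_{α∈A} is order convergent in E, then (x_α)_{α∈A} is uo-Cauchy in E, i.e. the net (x_α − x_β), indexed by pairs (α, β) ∈ A × A, uo-converges to 0. -/
universe u

/-- A net `(x_a)_{a ∈ A}` in a vector lattice `E` order converges to `l` if there is a
net `(y_b)_{b ∈ B}` decreasing to `0` such that for every `b` there is `a₀` with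
`|x_a - l| ≤ y_b` for all `a ≥ a₀`. -/
def OrderConvNet {E : Type u} [Lattice E] [AddCommGroup E] {A : Type*} [Preorder A]
    (x : A → E) (l : E) : Prop :=
  ∃ (B : Type u) (leB : B → B → Prop) (y : B → E),
    Nonempty B ∧
    (∀ b, leB b b) ∧
    (∀ b₁ b₂ b₃, leB b₁ b₂ → leB b₂ b₃ → leB b₁ b₃) ∧
    (∀ b₁ b₂, ∃ b₃, leB b₁ b₃ ∧ leB b₂ b₃) ∧
    (∀ b₁ b₂, leB b₁ b₂ → y b₂ ≤ y b₁) ∧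
    IsGLB (Set.range y) 0 ∧
    (∀ b, ∃ a₀, ∀ a, a₀ ≤ a → |x a - l| ≤ y b)

/-- `E` is Dedekind complete: every nonempty subset bounded above has a supremum. -/
def DedekindComplete (E : Type*) [Lattice E] : Prop :=
  ∀ S : Set E, S.Nonempty → BddAbove S → ∃ s, IsLUB S s

/-- `E` is laterally complete: every set of pairwise disjoint positive elements has a
supremum. -/
def LaterallyComplete (E : Type*) [Lattice E] [AddCommGroup E] : Prop :=
  ∀ S : Set E, (∀ x ∈ S, 0 ≤ x) → (S.Pairwise fun a b => a ⊓ b = 0) → ∃ s, IsLUB S s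

/-- `P` is a band projection on the vector lattice `E`. -/
def IsBandProjection {E : Type*} [Lattice E] [AddCommGroup E] [Module ℝ E]
    (P : E →ₗ[ℝ] E) : Prop :=
  (∀ x, P (P x) = P x) ∧ ∀ x : E, 0 ≤ x → 0 ≤ P x ∧ P x ≤ x

/-- A net `(x_a)` in a vector lattice converges in unbounded order (uo-converges) to `l`
if `|x_a - l| ⊓ w` order converges to `0` for every `w ∈ E⁺`. -/
def UoConvNet {E : Type u} [Lattice E] [AddCommGroup E] {A : Type*} [Preorder A]
    (x : A → E) (l : E) : Prop :=
  ∀ w : E, 0 ≤ w → OrderConvNet (fun a => |x a - l| ⊓ w) (0 : E)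

/-! Fix `w ≥ 0` and put `z_{αβ} = |x_α - x_β| ⊓ w`. As dominating net take the set of all
eventual upper bounds of `z`, directed downwards; it remains to see that its infimum is `0`.
For a band projection `P_γ` one has `z_{αβ} ≤ |P_γ x_α - P_γ x_β| + (w - P_γ w)`, and the
first term is eventually below any `y_b + y_b'` from the order convergence of `(P_γ x_α)`.
Hence a lower bound `c` of the eventual bounds satisfies `c ≤ w - P_γ w`, i.e. `P_γ w ≤ w - c`,
for every `γ`, and `P_γ w ↑ w` gives `c ≤ 0`. -/

instance Prod.isDirectedOrder {α β : Type*} [Preorder α] [Preorder β] [IsDirectedOrder α]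
    [IsDirectedOrder β] : IsDirectedOrder (α × β) where
  directed p q :=
    let ⟨a, ha₁, ha₂⟩ := exists_ge_ge p.1 q.1
    let ⟨b, hb₁, hb₂⟩ := exists_ge_ge p.2 q.2
    ⟨(a, b), ⟨ha₁, hb₁⟩, ⟨ha₂, hb₂⟩⟩

section EventualBounds

variable {E : Type u} [Lattice E] [AddCommGroup E] [AddLeftMono E] {A : Type*} [Preorder A]

def eventualBounds (x : A → E) (l : E) : Set E :=
  {d | ∃ a₀, ∀ a, a₀ ≤ a → |x a - l| ≤ d}

theorem orderConvNet_of_eventualBounds [IsDirectedOrder A] {x : A → E} {l : E}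
    (hne : (eventualBounds x l).Nonempty)
    (hinf : ∀ c ∈ lowerBounds (eventualBounds x l), c ≤ 0) : OrderConvNet x l := by
  obtain ⟨d₀, hd₀⟩ := hne
  refine ⟨eventualBounds x l, fun d d' => (d' : E) ≤ d, (↑), ⟨⟨d₀, hd₀⟩⟩, fun _ => le_rfl,
    fun _ _ _ h₁₂ h₂₃ => h₂₃.trans h₁₂, ?_, fun _ _ h => h, ?_, fun ⟨_, hd⟩ => hd⟩
  · rintro ⟨d₁, a₁, h₁⟩ ⟨d₂, a₂, h₂⟩
    obtain ⟨a₃, ha₁, ha₂⟩ := exists_ge_ge a₁ a₂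
    exact ⟨⟨d₁ ⊓ d₂, a₃, fun a ha => le_inf (h₁ a (ha₁.trans ha)) (h₂ a (ha₂.trans ha))⟩,
      inf_le_left, inf_le_right⟩
  · rw [Subtype.range_coe]
    exact ⟨fun d ⟨a₀, hd⟩ => (abs_nonneg _).trans (hd a₀ le_rfl), hinf⟩

theorem sub_mem_lowerBounds_eventualBounds_of_le {z v : A → E} {l m t c : E}
    (hzv : ∀ a, |z a - l| ≤ |v a - m| + t) (hc : c ∈ lowerBounds (eventualBounds z l)) :
    c - t ∈ lowerBounds (eventualBounds v m) := fun _ ⟨a₀, hd⟩ =>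
  sub_le_iff_le_add.2 <| hc ⟨a₀, fun a ha => (hzv a).trans (add_le_add (hd a ha) le_rfl)⟩

theorem le_of_forall_le_add_of_isGLB_zero {B : Type*} {y : B → E} (hy : IsGLB (Set.range y) 0)
    {c t : E} (h : ∀ b, c ≤ y b + t) : c ≤ t :=
  sub_nonpos.1 <| hy.2 <| Set.forall_mem_range.2 fun b => sub_le_iff_le_add.2 (h b)

/-- An order convergent net is order Cauchy. -/
theorem OrderConvNet.le_zero_of_mem_lowerBounds_eventualBounds_sub {u : A → E} {l c : E}
    (hu : OrderConvNet u l)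
    (hc : c ∈ lowerBounds (eventualBounds (fun p : A × A => u p.1 - u p.2) 0)) : c ≤ 0 := by
  obtain ⟨B, -, y, -, -, -, -, -, hy, hev⟩ := hu
  have hbound : ∀ b b', y b + y b' ∈ eventualBounds (fun p : A × A => u p.1 - u p.2) 0 := by
    intro b b'
    obtain ⟨a₀, ha₀⟩ := hev b
    obtain ⟨a₁, ha₁⟩ := hev b'
    refine ⟨(a₀, a₁), fun p hp => ?_⟩
    calc |u p.1 - u p.2 - 0| = |(u p.1 - l) + (l - u p.2)| := by rw [sub_zero, sub_add_sub_cancel]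
      _ ≤ |u p.1 - l| + |l - u p.2| := abs_add_le _ _
      _ = |u p.1 - l| + |u p.2 - l| := by rw [abs_sub_comm l]
      _ ≤ y b + y b' := add_le_add (ha₀ p.1 hp.1) (ha₁ p.2 hp.2)
  exact le_of_forall_le_add_of_isGLB_zero hy fun b' =>
    le_of_forall_le_add_of_isGLB_zero hy fun b => by rw [add_zero]; exact hc (hbound b b')

end EventualBounds

namespace IsBandProjection

variable {E : Type*} [Lattice E] [AddCommGroup E] [AddLeftMono E] [Module ℝ E]
  {P : E →ₗ[ℝ] E}

theorem monotone (hP : IsBandProjection P) : Monotone P := fun u v huv =>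
  sub_nonneg.1 <| by simpa only [map_sub] using (hP.2 (v - u) (sub_nonneg.2 huv)).1

theorem map_abs (hP : IsBandProjection P) (u : E) : P |u| = |P u| := by
  have hpos := hP.2 _ (posPart_nonneg u)
  have hneg := hP.2 _ (negPart_nonneg u)
  have hdisj : P u⁻ ⊓ P u⁺ = 0 := le_antisymm
    ((inf_le_inf hneg.2 hpos.2).trans_eq (by rw [inf_comm, posPart_inf_negPart_eq_zero]))
    (le_inf hneg.1 hpos.1)
  have h := two_nsmul_inf_eq_add_sub_abs_sub (P u⁻) (P u⁺)
  rw [hdisj, smul_zero, eq_comm, sub_eq_zero] at h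
  calc P |u| = P u⁻ + P u⁺ := by rw [← map_add, negPart_add_posPart]
    _ = |P u⁺ - P u⁻| := h
    _ = |P u| := by rw [← map_sub, posPart_sub_negPart]

theorem le_map_add_sub_map (hP : IsBandProjection P) {z w : E} (hzw : z ≤ w) :
    z ≤ P z + (w - P w) := by
  have h := (hP.2 (w - z) (sub_nonneg.2 hzw)).2
  rw [map_sub, sub_le_sub_iff] at h
  have h' : z - P z ≤ w - P w := sub_le_sub_iff.2 ((add_comm z _).trans_le h)
  calc z = P z + (z - P z) := (add_sub_cancel _ _).symm
    _ ≤ P z + (w - P w) := add_le_add le_rfl h'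

theorem abs_sub_inf_le (hP : IsBandProjection P) (u v w : E) :
    |u - v| ⊓ w ≤ |P u - P v| + (w - P w) :=
  calc |u - v| ⊓ w ≤ P (|u - v| ⊓ w) + (w - P w) := hP.le_map_add_sub_map inf_le_right
    _ ≤ P |u - v| + (w - P w) := add_le_add (hP.monotone inf_le_left) le_rfl
    _ = |P u - P v| + (w - P w) := by rw [hP.map_abs, map_sub]

end IsBandProjection

theorem uo_cauchy_from_net_of_band_projections_general
    {E : Type u} [Lattice E] [AddCommGroup E] [Module ℝ E]
    [CovariantClass E E (· + ·) (· ≤ ·)]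
    {Γ : Type*}
    {A : Type*} [Preorder A] [IsDirected A (· ≤ ·)] [Nonempty A]
    (P : Γ → E →ₗ[ℝ] E)
    (hP : ∀ γ, IsBandProjection (P γ))
    (hP_sup : ∀ x : E, 0 ≤ x → IsLUB (Set.range fun γ => P γ x) x)
    (x : A → E)
    (hconv : ∀ γ, ∃ l : E, OrderConvNet (fun a => P γ (x a)) l) :
    UoConvNet (fun p : A × A => x p.1 - x p.2) (0 : E) := by
  intro w hw
  have hz : ∀ p : A × A, |(|x p.1 - x p.2 - 0| ⊓ w) - 0| = |x p.1 - x p.2| ⊓ w := fun p => by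
    rw [sub_zero, sub_zero, abs_of_nonneg (le_inf (abs_nonneg _) hw)]
  refine orderConvNet_of_eventualBounds ⟨w, Classical.arbitrary _, fun p _ => ?_⟩ fun c hc => ?_
  · exact (hz p).trans_le inf_le_right
  have hc_le : ∀ γ, c ≤ w - P γ w := fun γ => by
    obtain ⟨l, hl⟩ := hconv γ
    refine sub_nonpos.1 (hl.le_zero_of_mem_lowerBounds_eventualBounds_sub
      (sub_mem_lowerBounds_eventualBounds_of_le (fun p => ?_) hc))
    beta_reduce
    rw [hz, sub_zero]
    exact (hP γ).abs_sub_inf_le _ _ _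
  have hw_le : w ≤ w - c :=
    (hP_sup w hw).2 (Set.forall_mem_range.2 fun γ => le_sub_comm.1 (hc_le γ))
  exact (le_sub_self_iff w).1 hw_le

/-- Theorem. Let `E` be a Dedekind complete vector lattice, `(P_γ)_{γ ∈ Γ}` a net of band
projections on `E` with `P_γ ↑ I`, and `(x_α)_{α ∈ A}` a net in `E`.  If for each `γ`
the net `(P_γ x_α)_α` is order convergent in `E`, then `(x_α)` is uo-Cauchy in `E`,
i.e. the net `(x_α - x_β)` indexed by pairs `(α, β) ∈ A × A` uo-converges to `0`. -/
theorem uo_cauchy_from_net_of_band_projections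
    {E : Type u} [Lattice E] [AddCommGroup E] [Module ℝ E]
    [CovariantClass E E (· + ·) (· ≤ ·)]
    {Γ : Type*} [Preorder Γ] [IsDirected Γ (· ≤ ·)] [Nonempty Γ]
    {A : Type*} [Preorder A] [IsDirected A (· ≤ ·)] [Nonempty A]
    (hE : DedekindComplete E)
    (P : Γ → E →ₗ[ℝ] E)
    (hP : ∀ γ, IsBandProjection (P γ))
    (hP_mono : ∀ γ γ' : Γ, γ ≤ γ' → ∀ x : E, 0 ≤ x → P γ x ≤ P γ' x)
    (hP_sup : ∀ x : E, 0 ≤ x → IsLUB (Set.range fun γ => P γ x) x)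
    (x : A → E)
    (hconv : ∀ γ, ∃ l : E, OrderConvNet (fun a => P γ (x a)) l) :
    UoConvNet (fun p : A × A => x p.1 - x p.2) (0 : E) :=
  uo_cauchy_from_net_of_band_projections_general P hP hP_sup x hconv
end

section
/- Let E be a universally complete vector lattice with weak order unit e and let (x_α)_{α∈A} be an increasing net in E⁺. For each λ > 0 the supremum b_λ := sup_α P_{(x_α − λe)^+} e exists in E (all terms lie in the interval [0, e]). Then the supremum sup_α x_α exists in E if and only if inf_{λ∈(0,∞)} b_λ = 0. -/
/-- `IsBandProj u e p` says that `p = P_u e`. -/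
def IsBandProj {E : Type*} [Lattice E] [AddCommGroup E] (u e p : E) : Prop :=
  IsLUB (Set.range fun k : ℕ => e ⊓ k • u) p

section Disjoint

variable {E : Type*} [SemilatticeInf E] [Zero E] {a b a' b' : E}

lemma nonneg_left_of_inf_eq_zero (h : a ⊓ b = 0) : 0 ≤ a := h ▸ inf_le_left

lemma nonneg_right_of_inf_eq_zero (h : a ⊓ b = 0) : 0 ≤ b := h ▸ inf_le_right

lemma inf_eq_zero_of_le_of_le (h : a ⊓ b = 0) (ha' : 0 ≤ a') (ha : a' ≤ a) (hb' : 0 ≤ b')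
    (hb : b' ≤ b) : a' ⊓ b' = 0 :=
  le_antisymm (h ▸ inf_le_inf ha hb) (le_inf ha' hb')

end Disjoint

section LatticeOrderedGroup

variable {E : Type*} [Lattice E] [AddCommGroup E] [AddLeftMono E] {a b c e p q : E}

lemma add_eq_sup_of_inf_eq_zero (h : a ⊓ b = 0) : a + b = a ⊔ b := by
  rw [← inf_add_sup, h, zero_add]

lemma inf_add_le_inf_add_inf (ha : 0 ≤ a) (hb : 0 ≤ b) (hc : 0 ≤ c) :
    a ⊓ (b + c) ≤ a ⊓ b + a ⊓ c := by
  rw [← sub_le_iff_le_add', sub_inf]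
  refine sup_le ((sub_nonpos.2 inf_le_left).trans (le_inf ha hc)) (le_inf ?_ ?_)
  · exact (sub_le_sub_right inf_le_left b).trans (sub_le_self a hb)
  · exact sub_le_iff_le_add'.2 inf_le_right

lemma inf_add_eq_zero (hb : a ⊓ b = 0) (hc : a ⊓ c = 0) : a ⊓ (b + c) = 0 := by
  refine le_antisymm ?_ (le_inf (nonneg_left_of_inf_eq_zero hb)
    (add_nonneg (nonneg_right_of_inf_eq_zero hb) (nonneg_right_of_inf_eq_zero hc)))
  simpa [hb, hc] using inf_add_le_inf_add_inf (nonneg_left_of_inf_eq_zero hb)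
    (nonneg_right_of_inf_eq_zero hb) (nonneg_right_of_inf_eq_zero hc)

lemma inf_nsmul_eq_zero (h : a ⊓ b = 0) : ∀ n : ℕ, a ⊓ n • b = 0
  | 0 => by rw [zero_nsmul, inf_eq_right.2 (nonneg_left_of_inf_eq_zero h)]
  | n + 1 => by rw [succ_nsmul]; exact inf_add_eq_zero (inf_nsmul_eq_zero h n) h

lemma nsmul_inf_nsmul_eq_zero (h : a ⊓ b = 0) (m n : ℕ) : m • a ⊓ n • b = 0 := by
  rw [inf_comm]
  exact inf_nsmul_eq_zero (by rw [inf_comm]; exact inf_nsmul_eq_zero h n) m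

lemma le_of_le_add_of_inf_eq_zero (h : a ≤ b + c) (hac : a ⊓ c = 0) (hb : 0 ≤ b) : a ≤ b :=
  calc a = a ⊓ (b + c) := (inf_eq_left.2 h).symm
    _ ≤ a ⊓ b + a ⊓ c := inf_add_le_inf_add_inf (nonneg_left_of_inf_eq_zero hac) hb
      (nonneg_right_of_inf_eq_zero hac)
    _ ≤ b := by rw [hac, add_zero]; exact inf_le_right

lemma IsLUB.nonpos_of_forall_add_le {ι : Type*} {f : ι → E} (hp : IsLUB (Set.range f) p)
    (h : ∀ i, f i + a ≤ p) : a ≤ 0 := by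
  have : p ≤ p - a := hp.2 <| by rintro _ ⟨i, rfl⟩; exact le_sub_iff_add_le.2 (h i)
  exact (add_le_iff_nonpos_right p).1 (le_sub_iff_add_le.1 this)

lemma inf_eq_zero_of_isLUB {ι : Type*} [Nonempty ι] {f : ι → E} (hp : IsLUB (Set.range f) p)
    (h : ∀ i, a ⊓ f i = 0) : a ⊓ p = 0 := by
  obtain ⟨i₀⟩ := ‹Nonempty ι›
  have hp0 : 0 ≤ p := (nonneg_right_of_inf_eq_zero (h i₀)).trans (hp.1 ⟨i₀, rfl⟩)
  refine le_antisymm (hp.nonpos_of_forall_add_le fun i => ?_)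
    (le_inf (nonneg_left_of_inf_eq_zero (h i₀)) hp0)
  have hdisj : f i ⊓ (a ⊓ p) = 0 := by
    rw [inf_comm]
    exact inf_eq_zero_of_le_of_le (h i) (le_inf (nonneg_left_of_inf_eq_zero (h i₀)) hp0)
      inf_le_left (nonneg_right_of_inf_eq_zero (h i)) le_rfl
  rw [add_eq_sup_of_inf_eq_zero hdisj]
  exact sup_le (hp.1 ⟨i, rfl⟩) inf_le_right

lemma DedekindComplete.nonpos_of_forall_nsmul_le (hDed : DedekindComplete E)
    (h : ∀ n : ℕ, n • a ≤ b) : a ≤ 0 := by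
  obtain ⟨t, ht⟩ := hDed _ (Set.range_nonempty fun n : ℕ => n • a)
    ⟨b, by rintro _ ⟨n, rfl⟩; exact h n⟩
  exact ht.nonpos_of_forall_add_le fun n => by rw [← succ_nsmul]; exact ht.1 ⟨n + 1, rfl⟩

lemma inf_sub_eq_zero_of_isLUB {ι : Type*} [Nonempty ι] {f : ι → E}
    (hf : ∀ i, f i ⊓ (e - f i) = 0) (hp : IsLUB (Set.range f) p) : p ⊓ (e - p) = 0 := by
  obtain ⟨i₀⟩ := ‹Nonempty ι›
  have hpe : p ≤ e :=
    hp.2 <| by rintro _ ⟨i, rfl⟩; exact sub_nonneg.1 (nonneg_right_of_inf_eq_zero (hf i))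
  rw [inf_comm]
  exact inf_eq_zero_of_isLUB hp fun i => by
    rw [inf_comm]
    exact inf_eq_zero_of_le_of_le (hf i) (nonneg_left_of_inf_eq_zero (hf i)) le_rfl
      (sub_nonneg.2 hpe) (sub_le_sub_left (hp.1 ⟨i, rfl⟩) e)

lemma sub_inf_sub_eq_zero_of_le (hp : p ⊓ (e - p) = 0) (hq : q ⊓ (e - q) = 0) (hqp : q ≤ p) :
    (p - q) ⊓ (e - (p - q)) = 0 := by
  have hpq : 0 ≤ p - q := sub_nonneg.2 hqp
  rw [show e - (p - q) = (e - p) + q by abel]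
  refine inf_add_eq_zero (inf_eq_zero_of_le_of_le hp hpq
    (sub_le_self p (nonneg_left_of_inf_eq_zero hq)) (nonneg_right_of_inf_eq_zero hp) le_rfl) ?_
  rw [inf_comm]
  exact inf_eq_zero_of_le_of_le hq (nonneg_left_of_inf_eq_zero hq) le_rfl hpq
    (sub_le_sub_right (sub_nonneg.1 (nonneg_right_of_inf_eq_zero hp)) q)

lemma posPart_sub_inf_eq_zero {y s : E} {n : ℕ} (hp : p ⊓ (e - p) = 0)
    (hy : (y - n • e)⁺ ⊓ p = 0) (hs : n • p ≤ s) : (y - s)⁺ ⊓ p = 0 := by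
  have hep : 0 ≤ e - p := nonneg_right_of_inf_eq_zero hp
  have hle : (y - s)⁺ ≤ (y - n • e)⁺ + n • (e - p) := by
    refine sup_le ?_ (add_nonneg (posPart_nonneg _) (nsmul_nonneg hep n))
    calc y - s ≤ y - n • p := sub_le_sub_left hs y
      _ = (y - n • e) + n • (e - p) := by rw [nsmul_sub]; abel
      _ ≤ (y - n • e)⁺ + n • (e - p) := add_le_add_left (le_posPart _) _
  have hdisj : p ⊓ ((y - n • e)⁺ + n • (e - p)) = 0 :=
    inf_add_eq_zero (by rw [inf_comm]; exact hy) (inf_nsmul_eq_zero hp n)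
  rw [inf_comm]
  exact inf_eq_zero_of_le_of_le hdisj (nonneg_left_of_inf_eq_zero hp) le_rfl (posPart_nonneg _) hle

section ComponentSequence

variable {c : ℕ → E}

lemma pairwise_inf_sub_succ_eq_zero (hc : Antitone c) (hcomp : ∀ n, c n ⊓ (e - c n) = 0) :
    Pairwise fun m n => (c m - c (m + 1)) ⊓ (c n - c (n + 1)) = 0 := by
  have hlt : ∀ m n, m < n → (c m - c (m + 1)) ⊓ (c n - c (n + 1)) = 0 := fun m n hmn => by
    rw [inf_comm]
    exact inf_eq_zero_of_le_of_le (hcomp (m + 1)) (sub_nonneg.2 (hc n.le_succ))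
      ((sub_le_self _ (nonneg_left_of_inf_eq_zero (hcomp _))).trans (hc hmn))
      (sub_nonneg.2 (hc m.le_succ))
      (sub_le_sub_right (sub_nonneg.1 (nonneg_right_of_inf_eq_zero (hcomp m))) _)
  intro m n hmn
  rcases hmn.lt_or_gt with h | h
  · exact hlt m n h
  · rw [inf_comm]; exact hlt n m h

lemma inf_le_of_forall_inf_sub_succ_eq_zero (hc : ∀ n, 0 ≤ c n) {g : E}
    (hg : ∀ n, g ⊓ (c n - c (n + 1)) = 0) : ∀ n, g ⊓ c 0 ≤ c n
  | 0 => inf_le_right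
  | n + 1 => by
    refine le_of_le_add_of_inf_eq_zero (c := c n - c (n + 1)) ?_ ?_ (hc (n + 1))
    · rw [add_sub_cancel]; exact inf_le_of_forall_inf_sub_succ_eq_zero hc hg n
    · exact inf_eq_zero_of_le_of_le (hg n) (le_inf (nonneg_left_of_inf_eq_zero (hg 0)) (hc 0))
        inf_le_left (nonneg_right_of_inf_eq_zero (hg n)) le_rfl

lemma bddAbove_range_of_forall_posPart_inf_le (hLat : LaterallyComplete E)
    (he_unit : ∀ z : E, 0 ≤ z → z ⊓ e = 0 → z = 0) (hc : Antitone c) (hc0 : c 0 = e)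
    (hcomp : ∀ n, c n ⊓ (e - c n) = 0) (hinf : IsGLB (Set.range c) 0) {ι : Type*} {y : ι → E}
    (hy : ∀ i n, (y i - (n + 1) • e)⁺ ⊓ e ≤ c (n + 1)) : BddAbove (Set.range y) := by
  set d : ℕ → E := fun n => c n - c (n + 1)
  have hc_nonneg : ∀ n, 0 ≤ c n := fun n => nonneg_left_of_inf_eq_zero (hcomp n)
  have hd_nonneg : ∀ n, 0 ≤ d n := fun n => sub_nonneg.2 (hc n.le_succ)
  have hd_le : ∀ n, d n ≤ e - c (n + 1) := fun n =>
    sub_le_sub_right (sub_nonneg.1 (nonneg_right_of_inf_eq_zero (hcomp n))) _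
  obtain ⟨s, hs⟩ := hLat (Set.range fun n => (n + 1) • d n)
    (by rintro _ ⟨n, rfl⟩; exact nsmul_nonneg (hd_nonneg n) _)
    (by
      rintro _ ⟨m, rfl⟩ _ ⟨n, rfl⟩ hmn
      exact nsmul_inf_nsmul_eq_zero
        (pairwise_inf_sub_succ_eq_zero hc hcomp fun h => hmn (by rw [h])) _ _)
  refine ⟨s, ?_⟩
  rintro _ ⟨i, rfl⟩
  have hyd : ∀ n, (y i - (n + 1) • e)⁺ ⊓ d n = 0 := fun n => by
    refine le_antisymm (le_trans (le_inf ?_ ?_) (hcomp (n + 1)).le)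
      (le_inf (posPart_nonneg _) (hd_nonneg n))
    · exact (inf_le_inf_left _ ((hd_le n).trans (sub_le_self _ (hc_nonneg _)))).trans (hy i n)
    · exact inf_le_right.trans (hd_le n)
  have hgd : ∀ n, (y i - s)⁺ ⊓ d n = 0 := fun n =>
    posPart_sub_inf_eq_zero (sub_inf_sub_eq_zero_of_le (hcomp n) (hcomp (n + 1)) (hc n.le_succ))
      (hyd n) (hs.1 ⟨n, rfl⟩)
  have hge : (y i - s)⁺ ⊓ e ≤ 0 := hinf.2 <| by
    rintro _ ⟨n, rfl⟩
    rw [← hc0]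
    exact inf_le_of_forall_inf_sub_succ_eq_zero hc_nonneg hgd n
  have hg : (y i - s)⁺ = 0 := he_unit _ (posPart_nonneg _)
    (le_antisymm hge (le_inf (posPart_nonneg _) (hc0 ▸ hc_nonneg 0)))
  exact sub_nonpos.1 (posPart_eq_zero.1 hg)

end ComponentSequence

end LatticeOrderedGroup

namespace IsBandProj

section Basic

variable {E : Type*} [Lattice E] [AddCommGroup E] {u e p : E}

lemma nonneg (hp : IsBandProj u e p) (he : 0 ≤ e) : 0 ≤ p := by
  simpa [inf_eq_right.2 he] using hp.1 ⟨0, rfl⟩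

lemma le (hp : IsBandProj u e p) : p ≤ e :=
  hp.2 <| by rintro _ ⟨k, rfl⟩; exact inf_le_left

lemma inf_le (hp : IsBandProj u e p) : e ⊓ u ≤ p := by
  simpa using hp.1 ⟨1, rfl⟩

end Basic

variable {E : Type*} [Lattice E] [AddCommGroup E] [AddLeftMono E] {u u' e p p' : E}

lemma mono (hp : IsBandProj u e p) (hp' : IsBandProj u' e p') (h : u ≤ u') : p ≤ p' :=
  hp.2 <| by
    rintro _ ⟨k, rfl⟩
    exact (inf_le_inf_left e (nsmul_le_nsmul_right h k)).trans (hp'.1 ⟨k, rfl⟩)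

lemma sub_inf_eq_zero (hp : IsBandProj u e p) (hu : 0 ≤ u) : (e - p) ⊓ u = 0 := by
  refine le_antisymm (hp.nonpos_of_forall_add_le fun k => ?_) (le_inf (sub_nonneg.2 hp.le) hu)
  have hk : e ⊓ k • u ≤ p := hp.1 ⟨k, rfl⟩
  refine le_trans (le_inf ?_ ?_) (hp.1 ⟨k + 1, rfl⟩)
  · calc e ⊓ k • u + (e - p) ⊓ u ≤ e ⊓ k • u + (e - e ⊓ k • u) :=
          add_le_add_right (inf_le_left.trans (sub_le_sub_left hk e)) _
      _ = e := add_sub_cancel _ _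
  · rw [succ_nsmul]
    exact add_le_add inf_le_right inf_le_right

lemma inf_sub_eq_zero (hp : IsBandProj u e p) (he : 0 ≤ e) (hu : 0 ≤ u) : p ⊓ (e - p) = 0 := by
  rw [inf_comm]
  exact inf_eq_zero_of_isLUB hp fun k => inf_eq_zero_of_le_of_le
    (inf_nsmul_eq_zero (hp.sub_inf_eq_zero hu) k) (sub_nonneg.2 hp.le) le_rfl
    (le_inf he (nsmul_nonneg hu k)) inf_le_right

end IsBandProj

instance {𝕜 E : Type*} [Ring 𝕜] [PartialOrder 𝕜] [IsOrderedRing 𝕜] [Preorder E] [AddCommGroup E]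
    [AddLeftMono E] [Module 𝕜 E] [PosSMulMono 𝕜 E] : SMulPosMono 𝕜 E :=
  ⟨fun _ hb _ _ h => sub_nonneg.1 <| by rw [← sub_smul]; exact smul_nonneg (sub_nonneg.2 h) hb⟩

lemma IsLUB.smul_le {E ι : Type*} [Preorder E] [AddCommMonoid E] [Module ℝ E] [PosSMulMono ℝ E]
    {f : ι → E} {p s : E} {l : ℝ} (hp : IsLUB (Set.range f) p) (hl : 0 < l)
    (h : ∀ i, l • f i ≤ s) : l • p ≤ s := by
  have : p ≤ l⁻¹ • s := hp.2 <| by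
    rintro _ ⟨i, rfl⟩
    simpa [inv_smul_smul₀ hl.ne'] using smul_le_smul_of_nonneg_left (h i) (inv_nonneg.2 hl.le)
  simpa [smul_inv_smul₀ hl.ne'] using smul_le_smul_of_nonneg_left this hl.le

section VectorLattice

variable {E : Type*} [Lattice E] [AddCommGroup E] [AddLeftMono E] [Module ℝ E] [PosSMulMono ℝ E]
  {a b e p s x : E} {l : ℝ}

lemma smul_inf_eq_zero (hl : 0 ≤ l) (h : a ⊓ b = 0) : (l • a) ⊓ b = 0 := by
  obtain ⟨n, hn⟩ := exists_nat_ge l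
  have hla : l • a ≤ n • a := by
    rw [← Nat.cast_smul_eq_nsmul ℝ]
    exact smul_le_smul_of_nonneg_right hn (nonneg_left_of_inf_eq_zero h)
  rw [inf_comm] at h ⊢
  exact inf_eq_zero_of_le_of_le (inf_nsmul_eq_zero h n) (nonneg_left_of_inf_eq_zero h) le_rfl
    (smul_nonneg hl (nonneg_right_of_inf_eq_zero h)) hla

lemma smul_inf_nsmul_posPart_sub_smul_le (hx : 0 ≤ x) (he : 0 ≤ e) (hl : 0 < l) (k : ℕ) :
    l • (e ⊓ k • (x - l • e)⁺) ≤ x := by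
  set u := (x - l • e)⁺
  set v := (x - l • e)⁻
  have hvu : v ⊓ u = 0 := by rw [inf_comm]; exact posPart_inf_negPart_eq_zero _
  have hv : (e ⊓ k • u) ⊓ v = 0 := by
    rw [inf_comm]
    exact inf_eq_zero_of_le_of_le (inf_nsmul_eq_zero hvu k) (negPart_nonneg _) le_rfl
      (le_inf he (nsmul_nonneg (posPart_nonneg _) k)) inf_le_right
  have hxv : l • (e ⊓ k • u) ≤ x + v := by
    rw [← sub_eq_sub_iff_add_eq_add.1 (posPart_sub_negPart (x - l • e))]
    calc l • (e ⊓ k • u) ≤ l • e := smul_le_smul_of_nonneg_left inf_le_left hl.le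
      _ ≤ u + l • e := le_add_of_nonneg_left (posPart_nonneg _)
  exact le_of_le_add_of_inf_eq_zero hxv (smul_inf_eq_zero hl.le hv) hx

lemma IsBandProj.smul_le (hp : IsBandProj (x - l • e)⁺ e p) (hx : 0 ≤ x) (he : 0 ≤ e)
    (hl : 0 < l) : l • p ≤ x :=
  IsLUB.smul_le hp hl (smul_inf_nsmul_posPart_sub_smul_le hx he hl)

end VectorLattice

section ComponentFamily

variable {E : Type*} [Lattice E] [AddCommGroup E] [AddLeftMono E] [Module ℝ E] {e : E} {b : ℝ → E}

lemma bddAbove_range_of_isGLB_zero (hLat : LaterallyComplete E) (he : 0 ≤ e)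
    (he_unit : ∀ z : E, 0 ≤ z → z ⊓ e = 0 → z = 0) (hb_comp : ∀ l : ℝ, 0 < l → b l ⊓ (e - b l) = 0)
    (hb_anti : ∀ l l' : ℝ, 0 < l → l ≤ l' → b l' ≤ b l)
    (h : IsGLB {z : E | ∃ l : ℝ, 0 < l ∧ z = b l} 0) {ι : Type*} {y : ι → E}
    (hy : ∀ i (l : ℝ), 0 < l → (y i - l • e)⁺ ⊓ e ≤ b l) : BddAbove (Set.range y) := by
  set c : ℕ → E := fun n => if n = 0 then e else b n
  have hc_succ : ∀ n : ℕ, c (n + 1) = b (n + 1) := fun n => by simp [c]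
  have hc_comp : ∀ n, c n ⊓ (e - c n) = 0
    | 0 => by simp [c, he]
    | n + 1 => by rw [hc_succ]; exact hb_comp _ n.cast_add_one_pos
  have hc_anti : Antitone c := antitone_nat_of_succ_le fun
    | 0 => by simpa [c] using sub_nonneg.1 (nonneg_right_of_inf_eq_zero (hb_comp 1 one_pos))
    | n + 1 => by
      rw [hc_succ, hc_succ]
      exact hb_anti _ _ n.cast_add_one_pos (by push_cast; linarith)
  have hc_inf : IsGLB (Set.range c) 0 := by
    refine ⟨by rintro _ ⟨n, rfl⟩; exact nonneg_left_of_inf_eq_zero (hc_comp n), fun z hz => h.2 ?_⟩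
    rintro _ ⟨l, hl, rfl⟩
    obtain ⟨n, hn⟩ := exists_nat_ge l
    exact (hz ⟨n + 1, rfl⟩).trans (hc_succ n ▸ hb_anti l _ hl (by linarith))
  refine bddAbove_range_of_forall_posPart_inf_le hLat he_unit hc_anti (if_pos rfl) hc_comp hc_inf
    fun i n => ?_
  rw [hc_succ, ← Nat.cast_smul_eq_nsmul ℝ, Nat.cast_succ]
  exact hy i _ n.cast_add_one_pos

end ComponentFamily

section BandProjectionNet

variable {E : Type*} [Lattice E] [AddCommGroup E] [AddLeftMono E] [Module ℝ E] [PosSMulMono ℝ E]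
  {e : E} {A : Type*} [Nonempty A] {x : A → E} {π : A → ℝ → E} {b : ℝ → E}

lemma isGLB_zero_of_isLUB (hDed : DedekindComplete E) (he : 0 ≤ e) (hx : ∀ α, 0 ≤ x α)
    (hπ : ∀ α l, IsBandProj (x α - l • e)⁺ e (π α l))
    (hb : ∀ l : ℝ, 0 < l → IsLUB (Set.range fun α => π α l) (b l)) {s : E}
    (hs : IsLUB (Set.range x) s) : IsGLB {z : E | ∃ l : ℝ, 0 < l ∧ z = b l} 0 := by
  obtain ⟨α₀⟩ := ‹Nonempty A›
  have hbs : ∀ l : ℝ, 0 < l → l • b l ≤ s := fun l hl =>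
    (hb l hl).smul_le hl fun α => ((hπ α l).smul_le (hx α) he hl).trans (hs.1 ⟨α, rfl⟩)
  refine ⟨?_, fun c hc => hDed.nonpos_of_forall_nsmul_le (b := s) fun n => ?_⟩
  · rintro _ ⟨l, hl, rfl⟩
    exact ((hπ α₀ l).nonneg he).trans ((hb l hl).1 ⟨α₀, rfl⟩)
  · rcases n.eq_zero_or_pos with rfl | hn
    · simpa using (hx α₀).trans (hs.1 ⟨α₀, rfl⟩)
    · have hn' : (0 : ℝ) < n := Nat.cast_pos.2 hn
      rw [← Nat.cast_smul_eq_nsmul ℝ]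
      exact (smul_le_smul_of_nonneg_left (hc ⟨n, hn', rfl⟩) hn'.le).trans (hbs n hn')

lemma exists_isLUB_of_isGLB_zero (hDed : DedekindComplete E) (hLat : LaterallyComplete E)
    (he : 0 ≤ e) (he_unit : ∀ z : E, 0 ≤ z → z ⊓ e = 0 → z = 0)
    (hπ : ∀ α l, IsBandProj (x α - l • e)⁺ e (π α l))
    (hb : ∀ l : ℝ, 0 < l → IsLUB (Set.range fun α => π α l) (b l))
    (h : IsGLB {z : E | ∃ l : ℝ, 0 < l ∧ z = b l} 0) : ∃ s, IsLUB (Set.range x) s := by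
  have hb_comp : ∀ l : ℝ, 0 < l → b l ⊓ (e - b l) = 0 := fun l hl =>
    inf_sub_eq_zero_of_isLUB (fun α => (hπ α l).inf_sub_eq_zero he (posPart_nonneg _)) (hb l hl)
  have hb_anti : ∀ l l' : ℝ, 0 < l → l ≤ l' → b l' ≤ b l := fun l l' hl hll' =>
    (hb l' (hl.trans_le hll')).2 <| by
      rintro _ ⟨α, rfl⟩
      refine ((hπ α l').mono (hπ α l) (posPart_mono ?_)).trans ((hb l hl).1 ⟨α, rfl⟩)
      exact sub_le_sub_left (smul_le_smul_of_nonneg_right hll' he) _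
  refine hDed _ (Set.range_nonempty x) (bddAbove_range_of_isGLB_zero hLat he he_unit hb_comp hb_anti
    h fun α l hl => ?_)
  rw [inf_comm]
  exact (hπ α l).inf_le.trans ((hb l hl).1 ⟨α, rfl⟩)

end BandProjectionNet

theorem sup_exists_iff_inf_band_projections_zero_general
    {E : Type*} [Lattice E] [AddCommGroup E] [Module ℝ E]
    [CovariantClass E E (· + ·) (· ≤ ·)] [PosSMulMono ℝ E]
    (hDed : DedekindComplete E) (hLat : LaterallyComplete E)
    (e : E) (he_pos : 0 ≤ e) (he_unit : ∀ x : E, 0 ≤ x → x ⊓ e = 0 → x = 0)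
    {A : Type*} [Nonempty A]
    (x : A → E) (hx_pos : ∀ α, 0 ≤ x α)
    (π : A → ℝ → E)
    (hπ : ∀ α (l : ℝ),
      IsLUB (Set.range fun k : ℕ => e ⊓ (k • (x α - l • e)⁺)) (π α l))
    (b : ℝ → E)
    (hb : ∀ l : ℝ, 0 < l → IsLUB (Set.range fun α => π α l) (b l)) :
    (∃ s, IsLUB (Set.range x) s) ↔ IsGLB {z : E | ∃ l : ℝ, 0 < l ∧ z = b l} 0 :=
  ⟨fun ⟨_, hs⟩ => isGLB_zero_of_isLUB hDed he_pos hx_pos hπ hb hs,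
    exists_isLUB_of_isGLB_zero hDed hLat he_pos he_unit hπ hb⟩

/-- Theorem. Let `E` be a universally complete vector lattice with weak order unit `e`
and let `(x_α)_{α ∈ A}` be an increasing net in `E⁺`.  For `u ∈ E⁺`, `P_u` denotes the
band projection onto the band generated by `u`, given by `P_u z = sup_k (z ⊓ k u)`;
here `π α l = P_{(x_α - l e)⁺} e` and, for each `l > 0`,
`b l = sup_α P_{(x_α - l e)⁺} e` (these suprema exist since all terms lie in `[0, e]`).
Then `sup_α x_α` exists in `E` if and only if `inf_{l ∈ (0,∞)} b l = 0`. -/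
theorem sup_exists_iff_inf_band_projections_zero
    {E : Type*} [Lattice E] [AddCommGroup E] [Module ℝ E]
    [CovariantClass E E (· + ·) (· ≤ ·)] [PosSMulMono ℝ E]
    (hDed : DedekindComplete E) (hLat : LaterallyComplete E)
    (e : E) (he_pos : 0 ≤ e) (he_unit : ∀ x : E, 0 ≤ x → x ⊓ e = 0 → x = 0)
    {A : Type*} [Preorder A] [IsDirected A (· ≤ ·)] [Nonempty A]
    (x : A → E) (hx_pos : ∀ α, 0 ≤ x α) (hx_mono : Monotone x)
    (π : A → ℝ → E)
    (hπ : ∀ α (l : ℝ),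
      IsLUB (Set.range fun k : ℕ => e ⊓ (k • (x α - l • e)⁺)) (π α l))
    (b : ℝ → E)
    (hb : ∀ l : ℝ, 0 < l → IsLUB (Set.range fun α => π α l) (b l)) :
    (∃ s, IsLUB (Set.range x) s) ↔ IsGLB {z : E | ∃ l : ℝ, 0 < l ∧ z = b l} 0 :=
  sup_exists_iff_inf_band_projections_zero_general hDed hLat e he_pos he_unit x hx_pos π hπ b hb
end
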